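/- Given a short exact sequence of sheaves of abelian groups 0 → E → F → G → 0 on a topological space X with E flasque, the sequence of global sections 0 → E(X) → F(X) → G(X) → 0 is exact; in particular F(X) → G(X) is surjective. -/

import Mathlib

open CategoryTheory CategoryTheory.Limits TopologicalSpace Opposite

universe u

/-- The global sections functor on sheaves of abelian groups on a topological space `X`. -/
noncomputable def globalSections (X : TopCat.{u}) :
    Sheaf (Opens.grothendieckTopology X) AddCommGrpCat.{u} ⥤ AddCommGrpCat.{u} :=
  sheafToPresheaf (Opens.grothendieckTopology X) AddCommGrpCat.{u} ⋙
    (evaluation (Opens X)ᵒᵖ AddCommGrpCat.{u}).obj (op ⊤)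

instance (X : TopCat.{u}) :
    (sheafToPresheaf (Opens.grothendieckTopology X) AddCommGrpCat.{u}).Additive :=
  { map_add := rfl }

instance (X : TopCat.{u}) : (globalSections X).Additive := by
  unfold globalSections; infer_instance

/-- A sheaf `E` of abelian groups on a topological space `X` is flasque if for every open
`U ⊆ X` the restriction map `E(X) → E(U)` is surjective. -/
def Flasque {X : TopCat.{u}} (E : Sheaf (Opens.grothendieckTopology X) AddCommGrpCat.{u}) :
    Prop :=
  ∀ U : Opens X, Function.Surjective (E.val.map (homOfLE (le_top : U ≤ ⊤)).op)

/-!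
A sheaf that is flasque in the sense above has all its restriction maps `E(V) → E(U)` surjective,
since `E(X) → E(U)` factors through `E(V)`. Surjectivity of `F(X) → G(X)` is then the classical
Zorn argument (`TopCat.Sheaf.IsFlasque.epi_of_shortExact`): a maximal partial lift of a global
section of `G` is extended across any missing point by correcting a local lift with a section of
`E`, which exists on the whole overlap and extends by flasqueness. The rest is left exactness of
sections.
-/

theorem Flasque.isFlasque {X : TopCat.{u}}
    {E : Sheaf (Opens.grothendieckTopology X) AddCommGrpCat.{u}} (hE : Flasque E) :
    TopCat.Sheaf.IsFlasque E where
  epi {U V} i := by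
    rw [AddCommGrpCat.epi_iff_surjective]
    refine Function.Surjective.of_comp (g := E.obj.map (homOfLE le_top).op) ?_
    rw [← ConcreteCategory.coe_comp, ← E.obj.map_comp]
    exact hE V.unop

namespace CategoryTheory.ShortComplex

variable {X : TopCat.{u}} (S : ShortComplex (Sheaf (Opens.grothendieckTopology X) AddCommGrpCat.{u}))

theorem sheafSections_f_injective [Mono S.f] (U : Opens X) :
    Function.Injective (S.f.hom.app (Opposite.op U)) := by
  rw [← AddCommGrpCat.mono_iff_injective]
  have : Mono S.f.hom := (sheafToPresheaf _ _).map_mono S.f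
  infer_instance

theorem sheafSections_g_f_apply (U : Opens X) (x : S.X₁.obj.obj (Opposite.op U)) :
    S.g.hom.app (Opposite.op U) (S.f.hom.app (Opposite.op U) x) = 0 := by
  rw [← ConcreteCategory.comp_apply, ← NatTrans.comp_app,
    ← ObjectProperty.FullSubcategory.comp_hom, S.zero]
  rfl

end CategoryTheory.ShortComplex

/-- Given a short exact sequence of sheaves of abelian groups `0 → E → F → G → 0` on a
topological space `X` with `E` flasque, the sequence of global sections
`0 → E(X) → F(X) → G(X) → 0` is exact; in particular `F(X) → G(X)` is surjective. -/
theorem flasque_global_sections_exact {X : TopCat.{u}}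
    (S : ShortComplex (Sheaf (Opens.grothendieckTopology X) AddCommGrpCat.{u}))
    (hS : S.ShortExact) (hE : Flasque S.X₁) :
    Function.Injective (S.f.hom.app (op ⊤)) ∧
      (∀ y : S.X₂.val.obj (op ⊤),
        S.g.hom.app (op ⊤) y = 0 ↔ ∃ x : S.X₁.val.obj (op ⊤), S.f.hom.app (op ⊤) x = y) ∧
      Function.Surjective (S.g.hom.app (op ⊤)) := by
  have : Mono S.f := hS.mono_f
  have : TopCat.Sheaf.IsFlasque S.X₁ := hE.isFlasque
  refine ⟨S.sheafSections_f_injective ⊤, fun y => ⟨?_, ?_⟩, ?_⟩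
  · exact TopCat.Sheaf.sections_exact_of_left_exact hS.exact hS.mono_f y
  · rintro ⟨x, rfl⟩
    exact S.sheafSections_g_f_apply ⊤ x
  · exact (AddCommGrpCat.epi_iff_surjective _).mp (TopCat.Sheaf.IsFlasque.epi_of_shortExact hS)
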